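/- arXiv:2205.01383 — 4 statements merged into one kernel-verified Lean document; each statement's English description precedes it below -/
import Mathlib

section
/- For all n ≥ 1 and k ≥ 1, the number f(n,k) of partial Łukasiewicz paths of length n ending at height k whose last step is an up-step satisfies (n+k−1) · f(n,k) = k · C(2n+k−3, n−1). -/
/-- A partial Łukasiewicz path of length `n` ending at height `k`:
a list of `n` integer steps, each `≥ -1`, with all partial sums `≥ 0`
and total sum `k`. -/
def IsPartialLuk (w : List ℤ) (n k : ℕ) : Prop :=
  w.length = n ∧ (∀ x ∈ w, -1 ≤ x) ∧ (∀ i, 0 ≤ (w.take i).sum) ∧ w.sum = k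

/-- The last step of the path is an up-step, i.e. `w_n ≥ 1`. -/
def LastStepUp (w : List ℤ) : Prop := ∃ x, w.getLast? = some x ∧ 1 ≤ x

/-!
Deleting the last step `k - m` of a path counted by `f(n+1, k)` leaves a partial Łukasiewicz
path of length `n` ending at a height `m < k`, so `f(n+1, k) = S(n, k-1)`, where `S(n, t)`
counts the paths of length `n` ending at height `≤ t`. Deleting the last step also gives
`S(n+1, t+1) = S(n+1, t) + S(n, t+2)`, `S(n+1, 0) = S(n, 1)` and `S(0, t) = 1`; Pascal's rule
shows that the ballot-type difference `C(2n+t, n) - C(2n+t, n+t+1) = (t+1)/(n+t+1) · C(2n+t, n)`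
satisfies the same recursion.
-/

open Finset

lemma isPartialLuk_append_singleton_iff (v : List ℤ) (x : ℤ) (n k : ℕ) :
    IsPartialLuk (v ++ [x]) (n + 1) k ↔
      -1 ≤ x ∧ ∃ m : ℕ, IsPartialLuk v n m ∧ (m : ℤ) + x = k := by
  constructor
  · rintro ⟨hlen, hmem, hpre, hsum⟩
    have hvlen : v.length = n := by simpa using hlen
    have hv : 0 ≤ v.sum := by simpa [List.take_append, hvlen] using hpre n
    refine ⟨hmem x (by simp), v.sum.toNat, ⟨hvlen, fun y hy => hmem y (by simp [hy]),
      fun i => ?_, by omega⟩, by simp at hsum; omega⟩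
    rcases le_or_gt i n with hi | hi
    · simpa [List.take_append, hvlen, Nat.sub_eq_zero_of_le hi] using hpre i
    · rwa [List.take_of_length_le (by omega)]
  · rintro ⟨hx, m, ⟨hlen, hmem, hpre, hsum⟩, hmx⟩
    refine ⟨by simp [hlen], ?_, fun i => ?_, by simp; omega⟩
    · simpa [or_imp, forall_and] using ⟨hmem, hx⟩
    · rcases le_or_gt i n with hi | hi
      · simpa [List.take_append, hlen, Nat.sub_eq_zero_of_le hi] using hpre i
      · rw [List.take_of_length_le (by simp [hlen]; omega)]
        simp; omega

lemma isPartialLuk_succ_iff (w : List ℤ) (n k : ℕ) :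
    IsPartialLuk w (n + 1) k ↔
      ∃ m ≤ k + 1, ∃ v, IsPartialLuk v n m ∧ w = v ++ [(k : ℤ) - m] := by
  constructor
  · intro hw
    have hne : w ≠ [] := by rintro rfl; simp [IsPartialLuk] at hw
    rw [← List.dropLast_append_getLast hne, isPartialLuk_append_singleton_iff] at hw
    obtain ⟨hx, m, hv, hmx⟩ := hw
    refine ⟨m, by omega, w.dropLast, hv, ?_⟩
    rw [show (k : ℤ) - m = w.getLast hne by omega, List.dropLast_append_getLast]
  · rintro ⟨m, hm, v, hv, rfl⟩
    exact (isPartialLuk_append_singleton_iff ..).2 ⟨by omega, m, hv, by ring⟩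

lemma lastStepUp_append_singleton_iff (v : List ℤ) (x : ℤ) :
    LastStepUp (v ++ [x]) ↔ 1 ≤ x := by
  simp [LastStepUp]

def snocSteps (F : ℕ → Finset (List ℤ)) (k : ℕ) (s : Finset ℕ) : Finset (List ℤ) :=
  s.biUnion fun m => (F m).image fun v => v ++ [(k : ℤ) - m]

lemma mem_snocSteps {F : ℕ → Finset (List ℤ)} {k : ℕ} {s : Finset ℕ} {w : List ℤ} :
    w ∈ snocSteps F k s ↔ ∃ m ∈ s, ∃ v ∈ F m, w = v ++ [(k : ℤ) - m] := by
  simp [snocSteps, eq_comm]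

lemma card_snocSteps (F : ℕ → Finset (List ℤ)) (k : ℕ) (s : Finset ℕ) :
    (snocSteps F k s).card = ∑ m ∈ s, (F m).card := by
  rw [snocSteps, card_biUnion]
  · exact sum_congr rfl fun m _ => card_image_of_injective _ (List.append_left_injective _)
  · intro m₁ _ m₂ _ hne
    simp only [Function.onFun, disjoint_left, mem_image]
    rintro w ⟨v₁, -, rfl⟩ ⟨v₂, -, he⟩
    have := congrArg List.getLast? he
    simp only [List.getLast?_concat, Option.some.injEq] at this
    omega

def partialLukPaths : ℕ → ℕ → Finset (List ℤ)
  | 0, k => if k = 0 then {[]} else ∅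
  | n + 1, k => snocSteps (partialLukPaths n) k (range (k + 2))

lemma mem_partialLukPaths (n k : ℕ) (w : List ℤ) :
    w ∈ partialLukPaths n k ↔ IsPartialLuk w n k := by
  induction n generalizing k w with
  | zero =>
    rw [partialLukPaths]
    split_ifs with hk
    · subst hk
      simp only [mem_singleton, IsPartialLuk, List.length_eq_zero_iff]
      constructor
      · rintro rfl
        simp
      · exact fun h => h.1
    · simp only [notMem_empty, false_iff]
      rintro ⟨hlen, -, -, hsum⟩
      rw [List.length_eq_zero_iff.1 hlen] at hsum
      simp at hsum
      omega
  | succ n ih =>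
    simp only [partialLukPaths, mem_snocSteps, mem_range, Nat.lt_succ_iff, ih,
      isPartialLuk_succ_iff]

lemma card_partialLukPaths_succ (n k : ℕ) :
    (partialLukPaths (n + 1) k).card = ∑ m ∈ range (k + 2), (partialLukPaths n m).card :=
  card_snocSteps ..

lemma card_partialLukPaths_zero (k : ℕ) :
    (partialLukPaths 0 k).card = if k = 0 then 1 else 0 := by
  rw [partialLukPaths]; split_ifs <;> rfl

/-- The number of partial Łukasiewicz paths of length `n` ending at height `≤ t`. -/
def ballot (n t : ℕ) : ℤ := (2 * n + t).choose n - (2 * n + t).choose (n + t + 1)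

lemma ballot_zero (t : ℕ) : ballot 0 t = 1 := by
  simp [ballot]

lemma ballot_succ_zero (n : ℕ) : ballot (n + 1) 0 = ballot n 1 := by
  have h₁ := Nat.choose_succ_succ' (2 * n + 1) n
  have h₂ := Nat.choose_succ_succ' (2 * n + 1) (n + 1)
  simp only [ballot, show 2 * (n + 1) + 0 = 2 * n + 1 + 1 by ring,
    show n + 1 + 0 + 1 = n + 1 + 1 by ring, h₁, h₂, Nat.cast_add]
  ring_nf

lemma ballot_succ_succ (n t : ℕ) :
    ballot (n + 1) (t + 1) = ballot (n + 1) t + ballot n (t + 2) := by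
  have h₁ := Nat.choose_succ_succ' (2 * n + t + 2) n
  have h₂ := Nat.choose_succ_succ' (2 * n + t + 2) (n + t + 2)
  simp only [ballot, show 2 * (n + 1) + (t + 1) = 2 * n + t + 2 + 1 by ring,
    show n + 1 + (t + 1) + 1 = n + t + 2 + 1 by ring, show 2 * (n + 1) + t = 2 * n + t + 2 by ring,
    show 2 * n + (t + 2) = 2 * n + t + 2 by ring, show n + 1 + t + 1 = n + t + 2 by ring,
    show n + (t + 2) + 1 = n + t + 2 + 1 by ring, h₁, h₂, Nat.cast_add]
  ring

lemma ballot_mul (n t : ℕ) : (n + t + 1) * ballot n t = (t + 1) * (2 * n + t).choose n := by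
  have h := Nat.choose_succ_right_eq (2 * n + t) (n + t)
  rw [← Nat.choose_symm_of_eq_add (show 2 * n + t = n + (n + t) by ring), show 2 * n + t - (n + t) = n by omega] at h
  have h' : ((2 * n + t).choose (n + t + 1) : ℤ) * (n + t + 1) = (2 * n + t).choose n * n := by
    exact_mod_cast h
  rw [ballot]
  linear_combination -h'

lemma sum_card_partialLukPaths (n t : ℕ) :
    (∑ m ∈ range (t + 1), (partialLukPaths n m).card : ℤ) = ballot n t := by
  induction n generalizing t with
  | zero =>
    simp [card_partialLukPaths_zero, ballot_zero]
  | succ n ih =>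
    induction t with
    | zero =>
      rw [ballot_succ_zero, ← ih 1]
      simp [card_partialLukPaths_succ]
    | succ t iht =>
      rw [sum_range_succ, iht, ballot_succ_succ, ← ih (t + 2), card_partialLukPaths_succ]
      push_cast
      rfl

lemma card_isPartialLuk_lastStepUp (n k : ℕ) :
    Nat.card {w : List ℤ // IsPartialLuk w (n + 1) k ∧ LastStepUp w} =
      ∑ m ∈ range k, (partialLukPaths n m).card := by
  have h (w : List ℤ) : IsPartialLuk w (n + 1) k ∧ LastStepUp w ↔
      w ∈ snocSteps (partialLukPaths n) k (range k) := by
    simp only [isPartialLuk_succ_iff, mem_snocSteps, mem_partialLukPaths, mem_range]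
    constructor
    · rintro ⟨⟨m, -, v, hv, rfl⟩, hup⟩
      rw [lastStepUp_append_singleton_iff] at hup
      exact ⟨m, by omega, v, hv, rfl⟩
    · rintro ⟨m, hm, v, hv, rfl⟩
      exact ⟨⟨m, by omega, v, hv, rfl⟩, (lastStepUp_append_singleton_iff ..).2 (by omega)⟩
  rw [Nat.card_congr (Equiv.subtypeEquivRight h), Nat.card_eq_finsetCard, card_snocSteps]

theorem partialLuk_lastUp_count (n k : ℕ) (hn : 1 ≤ n) (hk : 1 ≤ k) :
    (n + k - 1) * Nat.card {w : List ℤ // IsPartialLuk w n k ∧ LastStepUp w} =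
      k * Nat.choose (2 * n + k - 3) (n - 1) := by
  obtain ⟨n, rfl⟩ : ∃ n', n = n' + 1 := ⟨n - 1, by omega⟩
  obtain ⟨t, rfl⟩ : ∃ t, k = t + 1 := ⟨k - 1, by omega⟩
  rw [card_isPartialLuk_lastStepUp, show n + 1 + (t + 1) - 1 = n + t + 1 by omega,
    show 2 * (n + 1) + (t + 1) - 3 = 2 * n + t by omega, Nat.add_sub_cancel]
  have := ballot_mul n t
  rw [← sum_card_partialLukPaths] at this
  exact_mod_cast this
end

section
/- For all n ≥ 2 and k ≥ 0, the number h(n,k) of partial Łukasiewicz paths of length n ending at height k whose last step is a horizontal step satisfies (n+k) · h(n,k) = (k+2) · C(2n+k−3, n−2). -/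
/-- The last step of the path is a horizontal step, i.e. `w_n = 0`. -/
def LastStepFlat (w : List ℤ) : Prop := w.getLast? = some 0

/-!
Deleting the last step of a partial Łukasiewicz path of length `m + 1` ending at height `k`
leaves a path of length `m` ending at some height `j ≤ k + 1`, and a trailing horizontal step
forces `j = k`. Hence `h(m + 2, k) = L(m + 1, k)`, where `L(m, k)` counts all paths of length `m`
ending at height `k`, and `L(m + 1, k) = ∑_{j ≤ k + 1} L(m, j)`. This recurrence, together with
Pascal's rule, gives the ballot-type formula `L(m + 1, k) = C(2m+k+1, m) - C(2m+k+1, m+k+2)`,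
and the symmetry `(m+k+2) C(2m+k+1, m+k+2) = m C(2m+k+1, m)` turns it into the stated product.
-/

namespace IsPartialLuk

theorem append_singleton {u : List ℤ} {m j : ℕ} (h : IsPartialLuk u m j) {c : ℤ}
    (hc : -1 ≤ c) {k : ℕ} (hk : (k : ℤ) = j + c) : IsPartialLuk (u ++ [c]) (m + 1) k := by
  obtain ⟨hlen, hmem, htake, hsum⟩ := h
  refine ⟨by simp [hlen], ?_, fun i => ?_, by simp [hsum, hk]⟩
  · intro x hx
    rcases List.mem_append.1 hx with hx | hx
    · exact hmem x hx
    · rw [List.mem_singleton.1 hx]; exact hc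
  · rcases le_or_gt i u.length with hi | hi
    · rw [List.take_append_of_le_length hi]; exact htake i
    · rw [List.take_of_length_le (by simp; omega)]
      simp [hsum]; omega

theorem dropLast {w : List ℤ} {m k : ℕ} (h : IsPartialLuk w (m + 1) k) :
    IsPartialLuk w.dropLast m w.dropLast.sum.toNat ∧ 0 ≤ w.dropLast.sum ∧
      w.dropLast.sum ≤ k + 1 ∧ w = w.dropLast ++ [(k : ℤ) - w.dropLast.sum] := by
  obtain ⟨hlen, hmem, htake, hsum⟩ := h
  have hne : w ≠ [] := by rintro rfl; simp at hlen
  have htake_m : w.dropLast = w.take m := by rw [List.dropLast_eq_take, hlen]; rfl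
  have hnonneg : 0 ≤ w.dropLast.sum := htake_m ▸ htake m
  have hsplit : w.dropLast ++ [w.getLast hne] = w := List.dropLast_append_getLast hne
  have hlast : w.getLast hne = (k : ℤ) - w.dropLast.sum := by
    have : w.dropLast.sum + w.getLast hne = k := by
      rw [← hsum]; conv_rhs => rw [← hsplit]
      simp
    linarith
  have hstep : -1 ≤ w.getLast hne := hmem _ (List.getLast_mem hne)
  refine ⟨⟨?_, fun x hx => hmem x ((List.dropLast_sublist w).mem hx), fun i => ?_, ?_⟩,
    hnonneg, by omega, hlast ▸ hsplit.symm⟩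
  · rw [htake_m, List.length_take, hlen]; omega
  · rw [htake_m, List.take_take]; exact htake _
  · omega

theorem dropLast_of_lastStepFlat {w : List ℤ} {m k : ℕ} (h : IsPartialLuk w (m + 1) k)
    (hflat : LastStepFlat w) : w.dropLast.sum = k ∧ w = w.dropLast ++ [0] := by
  obtain ⟨-, -, -, hw⟩ := h.dropLast
  have hlast : w.getLast? = some ((k : ℤ) - w.dropLast.sum) := by
    conv_lhs => rw [hw]
    exact List.getLast?_concat
  rw [LastStepFlat, hlast, Option.some_inj] at hflat
  have hsum : w.dropLast.sum = k := by linarith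
  refine ⟨hsum, ?_⟩
  conv_lhs => rw [hw, hsum, sub_self]

end IsPartialLuk

def partialLukSuccEquiv (m k : ℕ) :
    {w : List ℤ // IsPartialLuk w (m + 1) k} ≃
      Σ j : Fin (k + 2), {u : List ℤ // IsPartialLuk u m j} where
  toFun w := ⟨⟨w.1.dropLast.sum.toNat, by have := w.2.dropLast; omega⟩,
    ⟨w.1.dropLast, w.2.dropLast.1⟩⟩
  invFun p := ⟨p.2.1 ++ [(k : ℤ) - (p.1 : ℕ)],
    p.2.2.append_singleton (by have := p.1.2; omega) (by ring)⟩
  left_inv w := by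
    obtain ⟨-, hnonneg, -, hw⟩ := w.2.dropLast
    ext1
    conv_rhs => rw [hw]
    simp [Int.toNat_of_nonneg hnonneg]
  right_inv p := by
    obtain ⟨j, u, hu⟩ := p
    have hsum : u.sum = ((j : ℕ) : ℤ) := hu.2.2.2
    refine Sigma.ext (by simp [hsum]) ?_
    simp only [List.dropLast_concat]
    rw [Subtype.heq_iff_coe_eq (fun x => by simp [hsum])]

def partialLukLastFlatEquiv (m k : ℕ) :
    {w : List ℤ // IsPartialLuk w (m + 1) k ∧ LastStepFlat w} ≃
      {u : List ℤ // IsPartialLuk u m k} where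
  toFun w := ⟨w.1.dropLast, by
    have h := w.2.1.dropLast.1
    rwa [(w.2.1.dropLast_of_lastStepFlat w.2.2).1, Int.toNat_natCast] at h⟩
  invFun u := ⟨u.1 ++ [0], u.2.append_singleton (by norm_num) (by ring),
    List.getLast?_concat⟩
  left_inv w := Subtype.ext (w.2.1.dropLast_of_lastStepFlat w.2.2).2.symm
  right_inv u := Subtype.ext List.dropLast_concat

instance finite_partialLuk (m k : ℕ) : Finite {w : List ℤ // IsPartialLuk w m k} := by
  induction m generalizing k with
  | zero =>
    have : Subsingleton {w : List ℤ // IsPartialLuk w 0 k} := ⟨fun v w => Subtype.ext <| by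
      rw [List.length_eq_zero_iff.1 v.2.1, List.length_eq_zero_iff.1 w.2.1]⟩
    infer_instance
  | succ m ih => exact Finite.of_equiv _ (partialLukSuccEquiv m k).symm

noncomputable def partialLukCount (m k : ℕ) : ℕ := Nat.card {w : List ℤ // IsPartialLuk w m k}

theorem partialLukCount_succ (m k : ℕ) :
    partialLukCount (m + 1) k = ∑ j ∈ Finset.range (k + 2), partialLukCount m j := by
  simp only [partialLukCount]
  rw [Nat.card_congr (partialLukSuccEquiv m k), Nat.card_sigma,
    Fin.sum_univ_eq_sum_range (fun j => Nat.card {u : List ℤ // IsPartialLuk u m j})]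

theorem partialLukCount_one (k : ℕ) : partialLukCount 1 k = 1 := by
  rw [partialLukCount, Nat.card_eq_one_iff_exists]
  refine ⟨⟨[(k : ℤ)], rfl, by simp, fun i => ?_, by simp⟩, fun ⟨w, hw⟩ => ?_⟩
  · rcases i with _ | i <;> simp
  · obtain ⟨a, rfl⟩ := List.length_eq_one_iff.1 hw.1
    have : a = k := by simpa using hw.2.2.2
    simp [this]

theorem partialLukCount_succ_zero (m : ℕ) :
    partialLukCount (m + 1) 0 = partialLukCount m 0 + partialLukCount m 1 := by
  simp [partialLukCount_succ m, Finset.sum_range_succ]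

theorem partialLukCount_succ_succ (m k : ℕ) :
    partialLukCount (m + 1) (k + 1) = partialLukCount (m + 1) k + partialLukCount m (k + 2) := by
  rw [partialLukCount_succ, partialLukCount_succ, Finset.sum_range_succ]

theorem partialLukCount_add_choose (m k : ℕ) :
    partialLukCount (m + 1) k + (2 * m + k + 1).choose (m + k + 2) =
      (2 * m + k + 1).choose m := by
  induction m generalizing k with
  | zero => simp [partialLukCount_one]
  | succ m ihm =>
    induction k with
    | zero =>
      show partialLukCount (m + 2) 0 + (2 * m + 3).choose (m + 3) = (2 * m + 3).choose (m + 1)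
      have e0 : partialLukCount (m + 1) 0 + (2 * m + 1).choose (m + 2) =
          (2 * m + 1).choose m := ihm 0
      have e1 : partialLukCount (m + 1) 1 + (2 * m + 2).choose (m + 3) =
          (2 * m + 2).choose m := ihm 1
      have p1 : (2 * m + 3).choose (m + 1) =
          (2 * m + 2).choose m + (2 * m + 2).choose (m + 1) := Nat.choose_succ_succ' _ _
      have p2 : (2 * m + 3).choose (m + 3) =
          (2 * m + 2).choose (m + 2) + (2 * m + 2).choose (m + 3) := Nat.choose_succ_succ' _ _
      have p3 : (2 * m + 2).choose (m + 1) =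
          (2 * m + 1).choose m + (2 * m + 1).choose (m + 1) := Nat.choose_succ_succ' _ _
      have p4 : (2 * m + 2).choose (m + 2) =
          (2 * m + 1).choose (m + 1) + (2 * m + 1).choose (m + 2) := Nat.choose_succ_succ' _ _
      have hrec : partialLukCount (m + 2) 0 =
          partialLukCount (m + 1) 0 + partialLukCount (m + 1) 1 :=
        partialLukCount_succ_zero (m + 1)
      omega
    | succ k ihk =>
      rw [show 2 * (m + 1) + (k + 1) + 1 = 2 * m + k + 4 by ring,
        show m + 1 + (k + 1) + 2 = m + k + 4 by ring, show m + 1 + 1 = m + 2 by ring]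
      replace ihk : partialLukCount (m + 2) k + (2 * m + k + 3).choose (m + k + 3) =
          (2 * m + k + 3).choose (m + 1) := by
        rwa [show 2 * m + k + 3 = 2 * (m + 1) + k + 1 by ring,
          show m + k + 3 = m + 1 + k + 2 by ring]
      have e2 : partialLukCount (m + 1) (k + 2) + (2 * m + k + 3).choose (m + k + 4) =
          (2 * m + k + 3).choose m := ihm (k + 2)
      have p1 : (2 * m + k + 4).choose (m + 1) =
          (2 * m + k + 3).choose m + (2 * m + k + 3).choose (m + 1) := Nat.choose_succ_succ' _ _
      have p2 : (2 * m + k + 4).choose (m + k + 4) =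
          (2 * m + k + 3).choose (m + k + 3) + (2 * m + k + 3).choose (m + k + 4) :=
        Nat.choose_succ_succ' _ _
      have hrec : partialLukCount (m + 2) (k + 1) =
          partialLukCount (m + 2) k + partialLukCount (m + 1) (k + 2) :=
        partialLukCount_succ_succ (m + 1) k
      omega

theorem add_two_mul_choose_eq_mul_choose (m k : ℕ) :
    (m + k + 2) * (2 * m + k + 1).choose (m + k + 2) = m * (2 * m + k + 1).choose m := by
  have hsymm : (2 * m + k + 1).choose (m + k + 1) = (2 * m + k + 1).choose m := by
    rw [← Nat.choose_symm (by omega : m ≤ 2 * m + k + 1)]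
    congr 1; omega
  have := Nat.choose_succ_right_eq (2 * m + k + 1) (m + k + 1)
  rw [show 2 * m + k + 1 - (m + k + 1) = m by omega, hsymm] at this
  linarith

theorem partialLuk_lastFlat_count (n k : ℕ) (hn : 2 ≤ n) :
    (n + k) * Nat.card {w : List ℤ // IsPartialLuk w n k ∧ LastStepFlat w} =
      (k + 2) * Nat.choose (2 * n + k - 3) (n - 2) := by
  obtain ⟨m, rfl⟩ := Nat.exists_eq_add_of_le' hn
  rw [Nat.card_congr (partialLukLastFlatEquiv (m + 1) k),
    show 2 * (m + 2) + k - 3 = 2 * m + k + 1 by omega, Nat.add_sub_cancel]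
  have hcount := partialLukCount_add_choose m k
  have hchoose := add_two_mul_choose_eq_mul_choose m k
  rw [partialLukCount] at hcount
  zify at hcount hchoose ⊢
  linear_combination ((m : ℤ) + k + 2) * hcount - hchoose
end

section
/- For all n ≥ 1 and 0 ≤ k ≤ n−1, the number H(n,k) of right-to-left partial Łukasiewicz paths of length n ending at height k whose last step is a horizontal step satisfies n · H(n,k) = (k+1) · C(2n−k−2, n−1). -/
/-- A right-to-left partial Łukasiewicz path of length `n` ending at height `k`:
a list of `n` integer steps, each `≤ 1`, with all partial sums `≥ 0`
and total sum `k`. -/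
def IsRLPartialLuk (w : List ℤ) (n k : ℕ) : Prop :=
  w.length = n ∧ (∀ x ∈ w, x ≤ 1) ∧ (∀ i, 0 ≤ (w.take i).sum) ∧ w.sum = k

/-!
Deleting the final flat step identifies these paths with the partial paths `P(n - 1, k)` of
length `n - 1` ending at height `k`. Deleting the last step of a path of length `m + 1` ending at
height `k` leaves a path ending at some height `j ≥ k - 1`, so
`P(m + 1, k) = ∑_{j = k - 1}^{m} P(m, j)`. By the hockey-stick identity this recursion is solved
by the ballot numbers `P(m, k) = C(2m - k, m) - C(2m - k, m + 1)`, and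
`C(2m - k, m + 1) (m + 1) = C(2m - k, m) (m - k)` turns this into
`(m + 1) P(m, k) = (k + 1) C(2m - k, m)`.
-/

open Finset

theorem Nat.sum_Icc_choose_of_le {m r : ℕ} (h : m ≤ r) (N : ℕ) :
    ∑ i ∈ Icc m N, i.choose r = (N + 1).choose (r + 1) := by
  rw [← Nat.sum_Icc_choose]
  refine (sum_subset (Icc_subset_Icc_left h) fun i hi hni => Nat.choose_eq_zero_of_lt ?_).symm
  simp only [mem_Icc, not_and, not_le] at hi hni
  omega

theorem Nat.sum_Icc_choose_two_mul_sub {a m r : ℕ} (ha : a ≤ m) (hr : m ≤ r) :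
    ∑ j ∈ Icc a m, (2 * m - j).choose r = (2 * m + 1 - a).choose (r + 1) := by
  rw [show 2 * m + 1 - a = 2 * m - a + 1 by omega, ← Nat.sum_Icc_choose_of_le hr]
  refine sum_nbij' (2 * m - ·) (2 * m - ·) ?_ ?_ ?_ ?_ fun _ _ => rfl <;>
    intro j hj <;> simp only [mem_Icc] at hj ⊢ <;> omega

theorem isRLPartialLuk_zero_zero_iff {w : List ℤ} : IsRLPartialLuk w 0 0 ↔ w = [] :=
  ⟨fun h => List.length_eq_zero_iff.1 h.1, by rintro rfl; exact ⟨rfl, by simp, by simp, by simp⟩⟩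

theorem IsRLPartialLuk.le_length {w : List ℤ} {n k : ℕ} (h : IsRLPartialLuk w n k) : k ≤ n := by
  have := List.sum_le_card_nsmul w 1 h.2.1
  rw [h.2.2.2, h.1] at this
  exact_mod_cast (by simpa using this : (k : ℤ) ≤ n)

theorem IsRLPartialLuk.ne_nil {w : List ℤ} {m k : ℕ} (h : IsRLPartialLuk w (m + 1) k) : w ≠ [] :=
  List.ne_nil_of_length_pos (by rw [h.1]; omega)

theorem isRLPartialLuk_append_singleton_iff {u : List ℤ} {s : ℤ} {m k : ℕ} :
    IsRLPartialLuk (u ++ [s]) (m + 1) k ↔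
      ∃ j : ℕ, IsRLPartialLuk u m j ∧ s ≤ 1 ∧ (k : ℤ) = j + s := by
  simp only [IsRLPartialLuk, List.length_append, List.length_singleton, List.mem_append,
    List.mem_singleton, List.sum_append, List.sum_singleton, Nat.add_right_cancel_iff]
  constructor
  · rintro ⟨hlen, hle, hpre, hsum⟩
    have hu : ∀ i, 0 ≤ (u.take i).sum := fun i => by
      have := hpre (min i m)
      rwa [List.take_append_of_le_length (by omega), ← hlen, ← List.take_take,
        List.take_of_length_le le_rfl] at this
    refine ⟨u.sum.toNat, ⟨hlen, fun x hx => hle x (.inl hx), hu, ?_⟩, hle s (.inr rfl), ?_⟩ <;>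
      have := hu u.length <;> simp only [List.take_length] at this <;> omega
  · rintro ⟨j, ⟨hlen, hle, hpre, hsum⟩, hs, hk⟩
    refine ⟨hlen, fun x hx => hx.elim (hle x) (· ▸ hs), fun i => ?_, by omega⟩
    rw [List.take_append, List.sum_append]
    rcases le_or_gt i u.length with hi | hi
    · simpa [Nat.sub_eq_zero_of_le hi] using hpre i
    · rw [List.take_of_length_le hi.le, List.take_of_length_le (by simp; omega)]
      simp only [List.sum_singleton]; omega

theorem lastStepFlat_append_singleton_iff {u : List ℤ} {s : ℤ} :
    LastStepFlat (u ++ [s]) ↔ s = 0 := by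
  simp [LastStepFlat]

def appendStepTo (m k : ℕ) (x : Σ j : Icc (k - 1) m, {u : List ℤ // IsRLPartialLuk u m j}) :
    {w : List ℤ // IsRLPartialLuk w (m + 1) k} :=
  ⟨x.2.1 ++ [(k : ℤ) - x.1],
    isRLPartialLuk_append_singleton_iff.2
      ⟨x.1, x.2.2, by have := (mem_Icc.1 x.1.2).1; omega, by ring⟩⟩

theorem appendStepTo_bijective (m k : ℕ) : Function.Bijective (appendStepTo m k) := by
  constructor
  · rintro ⟨⟨j, hj⟩, u, hu⟩ ⟨⟨j', hj'⟩, u', hu'⟩ h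
    obtain ⟨rfl, hs⟩ := List.append_inj' (Subtype.ext_iff.1 h) rfl
    exact Sigma.subtype_ext (Subtype.ext (by simpa using hs)) rfl
  · rintro ⟨w, hw⟩
    obtain ⟨u, s, rfl⟩ := (List.eq_nil_or_concat' w).resolve_left hw.ne_nil
    obtain ⟨j, hu, hs, hk⟩ := isRLPartialLuk_append_singleton_iff.1 hw
    exact ⟨⟨⟨j, mem_Icc.2 ⟨by omega, hu.le_length⟩⟩, u, hu⟩,
      Subtype.ext (by simp [appendStepTo, hk])⟩

instance finite_isRLPartialLuk (m k : ℕ) : Finite {w : List ℤ // IsRLPartialLuk w m k} := by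
  induction m generalizing k with
  | zero =>
    have : Subsingleton {w : List ℤ // IsRLPartialLuk w 0 k} :=
      ⟨fun u v => Subtype.ext <|
        (List.length_eq_zero_iff.1 u.2.1).trans (List.length_eq_zero_iff.1 v.2.1).symm⟩
    infer_instance
  | succ m ih => exact Finite.of_surjective _ (appendStepTo_bijective m k).2

theorem card_isRLPartialLuk_succ (m k : ℕ) :
    Nat.card {w : List ℤ // IsRLPartialLuk w (m + 1) k} =
      ∑ j ∈ Icc (k - 1) m, Nat.card {u : List ℤ // IsRLPartialLuk u m j} := by
  rw [← Nat.card_eq_of_bijective _ (appendStepTo_bijective m k), Nat.card_sigma,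
    ← sum_coe_sort (Icc (k - 1) m)]

def appendFlatStep (m k : ℕ) (u : {u : List ℤ // IsRLPartialLuk u m k}) :
    {w : List ℤ // IsRLPartialLuk w (m + 1) k ∧ LastStepFlat w} :=
  ⟨u.1 ++ [0], isRLPartialLuk_append_singleton_iff.2 ⟨k, u.2, zero_le_one, by simp⟩,
    lastStepFlat_append_singleton_iff.2 rfl⟩

theorem appendFlatStep_bijective (m k : ℕ) : Function.Bijective (appendFlatStep m k) := by
  constructor
  · intro u v h
    exact Subtype.ext (List.append_cancel_right (Subtype.ext_iff.1 h))
  · rintro ⟨w, hw, hflat⟩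
    obtain ⟨u, s, rfl⟩ := (List.eq_nil_or_concat' w).resolve_left hw.ne_nil
    obtain rfl := lastStepFlat_append_singleton_iff.1 hflat
    obtain ⟨j, hu, -, hk⟩ := isRLPartialLuk_append_singleton_iff.1 hw
    obtain rfl : j = k := by omega
    exact ⟨⟨u, hu⟩, rfl⟩

theorem card_isRLPartialLuk_add_choose {m k : ℕ} (hk : k ≤ m) :
    Nat.card {w : List ℤ // IsRLPartialLuk w m k} + (2 * m - k).choose (m + 1) =
      (2 * m - k).choose m := by
  induction m generalizing k with
  | zero =>
    obtain rfl : k = 0 := by omega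
    simp [isRLPartialLuk_zero_zero_iff]
  | succ m ih =>
    have hsum (a : ℕ) (ha : a ≤ m) :
        ∑ j ∈ Icc a m, Nat.card {u : List ℤ // IsRLPartialLuk u m j} +
          (2 * m + 1 - a).choose (m + 2) = (2 * m + 1 - a).choose (m + 1) := by
      rw [← Nat.sum_Icc_choose_two_mul_sub ha m.le_succ, ← Nat.sum_Icc_choose_two_mul_sub ha le_rfl,
        ← sum_add_distrib]
      exact sum_congr rfl fun j hj => ih (mem_Icc.1 hj).2
    rw [card_isRLPartialLuk_succ]
    rcases k with _ | k
    · -- `0 - 1 = 0`: the sum is the one for `k = 1`, and Pascal's rule with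
      -- `C(2m + 1, m) = C(2m + 1, m + 1)` converts the binomials
      have h := hsum 0 m.zero_le
      have h₁ : (2 * m + 2).choose (m + 2) =
          (2 * m + 1).choose (m + 1) + (2 * m + 1).choose (m + 2) := Nat.choose_succ_succ' _ _
      have h₂ : (2 * m + 2).choose (m + 1) =
          (2 * m + 1).choose m + (2 * m + 1).choose (m + 1) := Nat.choose_succ_succ' _ _
      have h₃ := Nat.choose_symm_half m
      show ∑ j ∈ Icc 0 m, _ + (2 * m + 2).choose (m + 2) = (2 * m + 2).choose (m + 1)
      rw [Nat.sub_zero] at h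
      omega
    · simpa [show 2 * (m + 1) - (k + 1) = 2 * m + 1 - k by omega] using hsum k (by omega)

theorem succ_mul_card_isRLPartialLuk {m k : ℕ} (hk : k ≤ m) :
    (m + 1) * Nat.card {w : List ℤ // IsRLPartialLuk w m k} = (k + 1) * (2 * m - k).choose m := by
  have h := card_isRLPartialLuk_add_choose hk
  have hc := Nat.choose_succ_right_eq (2 * m - k) m
  obtain ⟨d, rfl⟩ := Nat.exists_eq_add_of_le hk
  rw [show 2 * (k + d) - k - (k + d) = d by omega] at hc
  linear_combination (k + d + 1) * h - hc

theorem rlPartialLuk_lastFlat_count (n k : ℕ) (hn : 1 ≤ n) (hk : k ≤ n - 1) :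
    n * Nat.card {w : List ℤ // IsRLPartialLuk w n k ∧ LastStepFlat w} =
      (k + 1) * Nat.choose (2 * n - k - 2) (n - 1) := by
  obtain ⟨m, rfl⟩ : ∃ m, n = m + 1 := ⟨n - 1, by omega⟩
  rw [← Nat.card_eq_of_bijective _ (appendFlatStep_bijective m k),
    succ_mul_card_isRLPartialLuk (by omega), show 2 * (m + 1) - k - 2 = 2 * m - k by omega,
    Nat.add_sub_cancel]
end

section
/- Fix t ≥ 2 and let b_n be the number of right-to-left partial Łukasiewicz paths of length n (ending at any height) all of whose partial sums lie in [0, t]. Then the formal power series identity F_t(z) · (Σ_{n≥0} b_n z^n) = F_{t−2}(z) holds in ℤ⟦z⟧, where F_t(z) = Σ_{j ≥ 0, 2j ≤ t+2} (−1)^j · C(t+2−j, j) · z^j is the Fibonacci polynomial. -/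
/-- A right-to-left partial Łukasiewicz path of length `n` of height at most `t`:
a list of `n` integer steps, each `≤ 1`, with all partial sums in `[0, t]`. -/
def IsBddRLPartialLuk (w : List ℤ) (n t : ℕ) : Prop :=
  w.length = n ∧ (∀ x ∈ w, x ≤ 1) ∧
    (∀ i, 0 ≤ (w.take i).sum ∧ (w.take i).sum ≤ t)

/-- The Fibonacci polynomial `F_t(z) = Σ_j (-1)^j C(t+2-j, j) z^j`
(as a formal power series; `C(t+2-j, j) = 0` once `2j > t+2`). -/
noncomputable def fibPoly (t : ℕ) : PowerSeries ℤ :=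
  PowerSeries.mk fun j => (-1) ^ j * (Nat.choose (t + 2 - j) j : ℤ)

/-!
Let `T h` be the generating function of the bounded paths ending at height `≥ h`, so that the
series to be computed is `T 0`. Removing the last step matches the paths of length `n + 1` ending
at height `h ∈ [0, t]` with the paths of length `n` ending at height `≥ h - 1`; hence
`T h - T (h + 1) = X T (h - 1)` for `1 ≤ h ≤ t` and `T 0 - T 1 = 1 + X T 0`. The first relation is
the recurrence of the Lucas sequence `U` of `(1, X)`, whose terms are the Fibonacci polynomials,
`F_t = U (t + 3)`. Solving it from `T 0` and `T 1`, the boundary condition `T (t + 1) = 0` reads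
`U (t + 1) T 1 = X U t T 0`, and eliminating `T 1` with the relation at height `0` gives
`F_t T 0 = F_{t-2}`.
-/

open Finset PowerSeries

section LucasU

variable {R : Type*} [CommRing R]

def lucasU (P Q : R) : ℕ → R
  | 0 => 0
  | 1 => 1
  | n + 2 => P * lucasU P Q (n + 1) - Q * lucasU P Q n

@[simp] lemma lucasU_zero (P Q : R) : lucasU P Q 0 = 0 := rfl

@[simp] lemma lucasU_one (P Q : R) : lucasU P Q 1 = 1 := rfl

lemma lucasU_add_two (P Q : R) (n : ℕ) :
    lucasU P Q (n + 2) = P * lucasU P Q (n + 1) - Q * lucasU P Q n := rfl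

lemma eq_lucasU_of_recurrence {P Q : R} {f : ℕ → R} {N : ℕ}
    (hf : ∀ k, k + 1 < N → f (k + 2) = P * f (k + 1) - Q * f k) :
    ∀ k < N, f (k + 1) = lucasU P Q (k + 1) * f 1 - Q * lucasU P Q k * f 0 := by
  intro k
  induction k using Nat.twoStepInduction with
  | zero => simp
  | one => intro h; simp [hf 0 h, lucasU_add_two]
  | more k ih₀ ih₁ =>
    intro hk
    rw [hf (k + 1) hk, ih₁ (by omega), ih₀ (by omega), lucasU_add_two P Q (k + 1),
      lucasU_add_two P Q k]
    ring

end LucasU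

lemma Nat.add_one_sub_choose_add_one (m j : ℕ) :
    (m + 1 - j).choose (j + 1) = (m - j).choose (j + 1) + (m - j).choose j := by
  rcases le_or_gt j m with hj | hj
  · rw [Nat.sub_add_comm hj, Nat.choose_succ_succ', add_comm]
  · simp [Nat.sub_eq_zero_of_le hj, Nat.sub_eq_zero_of_le hj.le,
      Nat.choose_eq_zero_of_lt (show 0 < j by omega)]

lemma fibPoly_eq_lucasU (t : ℕ) : fibPoly t = lucasU 1 (X : ℤ⟦X⟧) (t + 3) := by
  let G : ℕ → ℤ⟦X⟧ := fun m => mk fun j => (-1) ^ j * ((m - j).choose j : ℤ)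
  have hG : ∀ m, G (m + 2) = 1 * G (m + 1) - X * G m := by
    intro m
    ext (_ | j)
    · simp [G]
    · simp only [G, coeff_mk, map_sub, one_mul, coeff_succ_X_mul, Nat.reduceSubDiff,
        Nat.add_one_sub_choose_add_one, Nat.cast_add, pow_succ]
      ring
  have hG₀ : G 0 = 1 := by ext (_ | j) <;> simp [G, coeff_one]
  have hG₁ : G 1 = 1 := by ext (_ | _ | j) <;> simp [G, coeff_one]
  have hfib := eq_lucasU_of_recurrence (N := t + 2) (fun k _ => hG k) (t + 1) (by omega)
  rw [hG₀, hG₁, mul_one, mul_one] at hfib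
  rw [lucasU_add_two, one_mul]
  exact hfib

lemma List.forall_take_append_singleton {α : Type*} (p : List α → Prop) (v : List α) (x : α) :
    (∀ i, p ((v ++ [x]).take i)) ↔ (∀ i, p (v.take i)) ∧ p (v ++ [x]) := by
  constructor
  · intro h
    refine ⟨fun i => ?_, by simpa [List.take_of_length_le] using h (v.length + 1)⟩
    rcases le_or_gt i v.length with hi | hi
    · simpa [List.take_append_of_le_length hi] using h i
    · simpa [List.take_of_length_le hi.le] using h v.length
  · rintro ⟨hv, hvx⟩ i
    rcases le_or_gt i v.length with hi | hi
    · simpa [List.take_append_of_le_length hi] using hv i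
    · simpa [List.take_of_length_le (show (v ++ [x]).length ≤ i by simpa)] using hvx

namespace IsBddRLPartialLuk

variable {w v : List ℤ} {x : ℤ} {n t : ℕ}

lemma zero_iff : IsBddRLPartialLuk w 0 t ↔ w = [] := by
  refine ⟨fun h => List.eq_nil_of_length_eq_zero h.1, ?_⟩
  rintro rfl
  simp [IsBddRLPartialLuk]

lemma append_singleton_iff :
    IsBddRLPartialLuk (v ++ [x]) (n + 1) t ↔
      IsBddRLPartialLuk v n t ∧ x ≤ 1 ∧ 0 ≤ v.sum + x ∧ v.sum + x ≤ t := by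
  have hsums := List.forall_take_append_singleton (fun u : List ℤ => 0 ≤ u.sum ∧ u.sum ≤ t) v x
  simp only [List.sum_append, List.sum_singleton] at hsums
  rw [IsBddRLPartialLuk, IsBddRLPartialLuk, hsums]
  simp only [List.length_append, List.length_singleton, add_left_inj, List.mem_append,
    List.mem_singleton, or_imp, forall_and, forall_eq]
  tauto

lemma sum_nonneg (h : IsBddRLPartialLuk w n t) : 0 ≤ w.sum := by
  simpa using (h.2.2 w.length).1

lemma sum_le (h : IsBddRLPartialLuk w n t) : w.sum ≤ t := by
  simpa using (h.2.2 w.length).2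

lemma exists_eq_append_singleton (h : IsBddRLPartialLuk w (n + 1) t) :
    ∃ v x, w = v ++ [x] :=
  (List.eq_nil_or_concat' w).resolve_left fun hw => by simpa [hw] using h.1

lemma finite_setOf (n t : ℕ) : {w | IsBddRLPartialLuk w n t}.Finite := by
  induction n with
  | zero => simp [zero_iff]
  | succ n ih =>
    refine (ih.image2 (fun v x => v ++ [x]) (Set.finite_Icc (-(t : ℤ)) 1)).subset ?_
    intro w hw
    obtain ⟨v, x, rfl⟩ := exists_eq_append_singleton hw
    obtain ⟨hv, hx, hvx, -⟩ := append_singleton_iff.mp hw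
    exact ⟨v, hv, x, ⟨by linarith [hv.sum_le], hx⟩, rfl⟩

end IsBddRLPartialLuk

namespace BddRLPartialLuk

noncomputable def paths (t n : ℕ) : Finset (List ℤ) :=
  (IsBddRLPartialLuk.finite_setOf n t).toFinset

@[simp] lemma mem_paths {t n : ℕ} {w : List ℤ} : w ∈ paths t n ↔ IsBddRLPartialLuk w n t :=
  Set.Finite.mem_toFinset _

lemma card_paths (t n : ℕ) : Nat.card {w // IsBddRLPartialLuk w n t} = #(paths t n) :=
  Nat.card_eq_card_finite_toFinset _

lemma paths_zero (t : ℕ) : paths t 0 = {[]} := by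
  ext w
  simp [IsBddRLPartialLuk.zero_iff]

-- The bijection appends the step `h - v.sum`.
lemma card_filter_sum_eq_succ {t n : ℕ} {h : ℤ} (h₀ : 0 ≤ h) (ht : h ≤ t) :
    #{w ∈ paths t (n + 1) | w.sum = h} = #{v ∈ paths t n | h - 1 ≤ v.sum} := by
  symm
  refine card_bij (fun v _ => v ++ [h - v.sum]) ?_ ?_ ?_
  · intro v hv
    simp only [mem_filter, mem_paths] at hv ⊢
    exact ⟨IsBddRLPartialLuk.append_singleton_iff.mpr ⟨hv.1, by linarith, by simpa, by simpa⟩,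
      by simp⟩
  · intro v₁ _ v₂ _ hv
    exact List.append_inj_left' hv rfl
  · intro w hw
    simp only [mem_filter, mem_paths] at hw
    obtain ⟨hw, rfl⟩ := hw
    obtain ⟨v, x, rfl⟩ := IsBddRLPartialLuk.exists_eq_append_singleton hw
    obtain ⟨hv, hx, -⟩ := IsBddRLPartialLuk.append_singleton_iff.mp hw
    refine ⟨v, ?_, by simp⟩
    simp only [mem_filter, mem_paths, List.sum_append, List.sum_singleton]
    exact ⟨hv, by linarith⟩

noncomputable def tailGF (t : ℕ) (h : ℤ) : ℤ⟦X⟧ :=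
  mk fun n => (#{w ∈ paths t n | h ≤ w.sum} : ℤ)

lemma tailGF_of_nonpos {t : ℕ} {h : ℤ} (hh : h ≤ 0) :
    tailGF t h = mk fun n => (#(paths t n) : ℤ) := by
  unfold tailGF
  congr! 3 with n
  rw [filter_true_of_mem fun w hw => hh.trans (mem_paths.mp hw).sum_nonneg]

lemma tailGF_of_lt {t : ℕ} {h : ℤ} (hh : t < h) : tailGF t h = 0 := by
  ext n
  simp only [tailGF, coeff_mk, map_zero, Nat.cast_eq_zero, card_eq_zero, filter_eq_empty_iff,
    mem_paths, not_le]
  exact fun w hw => hw.sum_le.trans_lt hh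

lemma coeff_zero_tailGF (t : ℕ) (h : ℤ) : coeff 0 (tailGF t h) = if h ≤ 0 then 1 else 0 := by
  simp only [tailGF, coeff_mk, paths_zero, filter_singleton, List.sum_nil]
  split_ifs with hh <;> simp [hh]

lemma coeff_succ_tailGF_sub {t n : ℕ} {h : ℤ} (h₀ : 0 ≤ h) (ht : h ≤ t) :
    coeff (n + 1) (tailGF t h - tailGF t (h + 1)) = coeff n (tailGF t (h - 1)) := by
  have hsplit : #{w ∈ paths t (n + 1) | h ≤ w.sum} =
      #{w ∈ paths t (n + 1) | w.sum = h} + #{w ∈ paths t (n + 1) | h + 1 ≤ w.sum} := by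
    rw [← card_union_of_disjoint (disjoint_filter.mpr fun _ _ h₁ h₂ => by omega), ← filter_or]
    congr! 2 with w
    omega
  simp only [tailGF, map_sub, coeff_mk, hsplit, card_filter_sum_eq_succ h₀ ht]
  push_cast
  ring

lemma tailGF_sub_tailGF_add_one {t : ℕ} {h : ℤ} (h₀ : 0 < h) (ht : h ≤ t) :
    tailGF t h - tailGF t (h + 1) = X * tailGF t (h - 1) := by
  ext (_ | n)
  · simp only [map_sub, coeff_zero_tailGF, coeff_zero_X_mul]
    split_ifs <;> omega
  · rw [coeff_succ_tailGF_sub h₀.le ht, coeff_succ_X_mul]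

lemma tailGF_zero_sub_tailGF_one (t : ℕ) :
    tailGF t 0 - tailGF t 1 = 1 + X * tailGF t 0 := by
  ext (_ | n)
  · simp only [map_sub, map_add, coeff_zero_tailGF, coeff_zero_X_mul, coeff_zero_one]
    norm_num
  · have hcoeff := coeff_succ_tailGF_sub (n := n) (h := 0) le_rfl (Nat.cast_nonneg t)
    rw [zero_add, zero_sub, tailGF_of_nonpos (h := -1) (by norm_num),
      ← tailGF_of_nonpos le_rfl] at hcoeff
    rw [hcoeff, map_add, coeff_succ_X_mul, coeff_one, if_neg n.succ_ne_zero, zero_add]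

-- This is `T (t + 1) = 0`, with `T` solved from `T 0` and `T 1` by the Lucas recurrence.
lemma lucasU_mul_tailGF (t : ℕ) :
    lucasU 1 X (t + 1) * tailGF t 1 - X * lucasU 1 X t * tailGF t 0 = 0 := by
  have hrec : ∀ k, k + 1 < t + 1 → tailGF t ((k + 2 : ℕ) : ℤ) =
      1 * tailGF t ((k + 1 : ℕ) : ℤ) - X * tailGF t (k : ℕ) := by
    intro k hk
    have hk' := tailGF_sub_tailGF_add_one (t := t) (h := k + 1) (by positivity) (by omega)
    push_cast
    rw [add_sub_cancel_right, add_assoc, one_add_one_eq_two] at hk'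
    rw [one_mul, ← hk']
    ring
  have hsol := eq_lucasU_of_recurrence (f := fun k : ℕ => tailGF t k) hrec t (by omega)
  rw [Nat.cast_one, Nat.cast_zero, tailGF_of_lt (h := ((t + 1 : ℕ) : ℤ)) (by omega)] at hsol
  exact hsol.symm

lemma fibPoly_mul_tailGF_zero {t : ℕ} (ht : 2 ≤ t) :
    fibPoly t * tailGF t 0 = fibPoly (t - 2) := by
  rw [fibPoly_eq_lucasU, fibPoly_eq_lucasU, show t - 2 + 3 = t + 1 by omega, lucasU_add_two,
    lucasU_add_two]
  linear_combination lucasU 1 X (t + 1) * tailGF_zero_sub_tailGF_one t + lucasU_mul_tailGF t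

end BddRLPartialLuk

theorem bddRLPartialLuk_gf (t : ℕ) (ht : 2 ≤ t) :
    fibPoly t *
      PowerSeries.mk
        (fun n => (Nat.card {w : List ℤ // IsBddRLPartialLuk w n t} : ℤ)) =
      fibPoly (t - 2) := by
  simp only [BddRLPartialLuk.card_paths, ← BddRLPartialLuk.tailGF_of_nonpos le_rfl]
  exact BddRLPartialLuk.fibPoly_mul_tailGF_zero ht
end
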